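/- (Theorem 4.1, equivalence (1)⇔(2).) Let f : B_Δ → ℂ be a function. Then f ∈ S_{2,gen}(B_Δ) if and only if the following holds for every pair of distinct points z_1, z_2 ∈ B_Δ: for every positive semidefinite 2×2 complex matrix (k_{ij})_{i,j=1,2} with the property that for all vectors ξ_1, ξ_2 ∈ ℂ^r the 2×2 matrix with (i,j)-entry (⟨ξ_i, ξ_j⟩ − ⟨Δ(z_i)ξ_i, Δ(z_j)ξ_j⟩)·k_{ij} is positive semidefinite, the 2×2 matrix with (i,j)-entry (1 − conj(f(z_j))·f(z_i))·k_{ij} is also positive semidefinite. -/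

import Mathlib

open scoped Matrix.Norms.L2Operator ComplexOrder
open Matrix

noncomputable section

/-- The positive semidefinite square root of a positive semidefinite matrix (removed from
Mathlib; restored with its old definition). -/
def Matrix.PosSemidef.sqrt {n' : Type*} [Fintype n'] [DecidableEq n'] {M : Matrix n' n' ℂ}
    (hA : M.PosSemidef) : Matrix n' n' ℂ :=
  (hA.1.eigenvectorUnitary : Matrix n' n' ℂ) *
    diagonal (fun i => ((√(hA.1.eigenvalues i) : ℝ) : ℂ)) *
    (star hA.1.eigenvectorUnitary : Matrix n' n' ℂ)

open scoped Classical in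
/-- Square root of a positive semidefinite matrix (junk value `0` otherwise). -/
def msqrt {n' : Type*} [Fintype n'] [DecidableEq n'] (M : Matrix n' n' ℂ) : Matrix n' n' ℂ :=
  if h : M.PosSemidef then h.sqrt else 0

/-- The pseudo-distance `d_Δ`. -/
def dDelta {α m' n' : Type*} [Fintype m'] [Fintype n'] [DecidableEq m'] [DecidableEq n']
    (Δ : α → Matrix m' n' ℂ) (z w : α) : ℝ :=
  ‖(msqrt (1 - Δ w * (Δ w)ᴴ))⁻¹ * ((Δ z - Δ w) *
      ((1 - (Δ w)ᴴ * Δ z)⁻¹ * msqrt (1 - (Δ w)ᴴ * Δ w)))‖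

/-- `B_Δ = {z ∈ E : ‖Δ(z)‖ < 1}`. -/
def BDelta {α m' n' : Type*} [Fintype m'] [Fintype n'] [DecidableEq n'] (E : Set α)
    (Δ : α → Matrix m' n' ℂ) : Set α :=
  {z | z ∈ E ∧ ‖Δ z‖ < 1}

/-- pseudo-hyperbolic distance on the unit disk -/
def dDisk (a b : ℂ) : ℝ := ‖a - b‖ / ‖1 - (starRingEnd ℂ) b * a‖

/-- elementary tensor `ξ ⊗ v` in `ℂ^m ⊗ ℂ^2`, realized as a function on `m × Fin 2` -/
def tpr {m' : Type*} (ξ : m' → ℂ) (v : Fin 2 → ℂ) : m' × Fin 2 → ℂ :=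
  fun p => ξ p.1 * v p.2

/-- inner product, conjugate-linear in the second variable -/
def herm {m' : Type*} [Fintype m'] (ξ η : m' → ℂ) : ℂ :=
  ∑ p, ξ p * (starRingEnd ℂ) (η p)

/-- positive semidefiniteness of a `2 × 2` kernel `(a i j)` -/
def PSD2 (a : Fin 2 → Fin 2 → ℂ) : Prop :=
  ∀ c : Fin 2 → ℂ, 0 ≤ ∑ i, ∑ j, a i j * c i * (starRingEnd ℂ) (c j)

/-- `T` is a generic tuple with joint eigenvectors `v` and joint eigenvalues `z 0 ≠ z 1`. -/
def IsGenericTuple {d : ℕ} (T : Fin d → Matrix (Fin 2) (Fin 2) ℂ)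
    (v : Fin 2 → Fin 2 → ℂ) (z : Fin 2 → Fin d → ℂ) : Prop :=
  LinearIndependent ℂ v ∧ z 0 ≠ z 1 ∧ ∀ i j, T i *ᵥ v j = z j i • v j

/-- `‖Δ(T)‖ ≤ 1`, where `Δ(T)` is the matrix on `ℂ^s ⊗ ℂ^2` determined by
`Δ(T)(e_i ⊗ v_j) = (Δ(z_j) e_i) ⊗ v_j`. -/
def DeltaTContract {β : Type*} {s r : ℕ} (Δ : β → Matrix (Fin s) (Fin r) ℂ)
    (v : Fin 2 → Fin 2 → ℂ) (z : Fin 2 → β) : Prop :=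
  ∀ DT : Matrix (Fin s × Fin 2) (Fin r × Fin 2) ℂ,
    (∀ (i : Fin r) (j : Fin 2),
      DT *ᵥ tpr (Pi.single i 1) (v j) = tpr (Δ (z j) *ᵥ Pi.single i 1) (v j)) →
    ‖DT‖ ≤ 1

/-- membership in the class `S_{2,gen}(B_Δ)` -/
def MemS2gen {d s r : ℕ} (E : Set (Fin d → ℂ)) (Δ : (Fin d → ℂ) → Matrix (Fin s) (Fin r) ℂ)
    (f : (Fin d → ℂ) → ℂ) : Prop :=
  ∀ (T : Fin d → Matrix (Fin 2) (Fin 2) ℂ) (v : Fin 2 → Fin 2 → ℂ) (z : Fin 2 → Fin d → ℂ),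
    IsGenericTuple T v z → (∀ j, z j ∈ BDelta E Δ) → DeltaTContract Δ v z →
    ∀ fT : Matrix (Fin 2) (Fin 2) ℂ, (∀ j, fT *ᵥ v j = f (z j) • v j) → ‖fT‖ ≤ 1

/-- the Möbius pseudo-distance of a domain `Ω` -/
def dMobius {α : Type*} [NormedAddCommGroup α] [NormedSpace ℂ α] (Ω : Set α) (z w : α) : ℝ :=
  sSup {x | ∃ g : α → ℂ, DifferentiableOn ℂ g Ω ∧ (∀ ζ ∈ Ω, ‖g ζ‖ < 1) ∧ x = dDisk (g z) (g w)}

/-- `Ω` is a complete spectral domain for the diagonalizable tuple with eigenvectors `v` and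
joint eigenvalues `z 0, z 1`. -/
def IsCompleteSpectralDomainFor {α : Type*} [NormedAddCommGroup α] [NormedSpace ℂ α]
    (Ω : Set α) (v : Fin 2 → Fin 2 → ℂ) (z : Fin 2 → α) : Prop :=
  ∀ (n : ℕ) (F : α → Matrix (Fin n) (Fin n) ℂ),
    (∀ i j, DifferentiableOn ℂ (fun ζ => F ζ i j) Ω) →
    ∀ C : ℝ, (∀ ζ ∈ Ω, ‖F ζ‖ ≤ C) →
    ∀ FT : Matrix (Fin n × Fin 2) (Fin n × Fin 2) ℂ,
      (∀ (ξ : Fin n → ℂ) (j : Fin 2), FT *ᵥ tpr ξ (v j) = tpr (F (z j) *ᵥ ξ) (v j)) →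
      ‖FT‖ ≤ C

/-!
Let `v₀, v₁` be joint eigenvectors of a generic pair. Every vector of `ℂ²` is `∑ cⱼ vⱼ` and every
vector of `ℂʳ ⊗ ℂ²` is `∑ ξⱼ ⊗ vⱼ`; expanding squared norms in these forms shows that
`‖f(T)‖ ≤ 1` iff `(1 - conj f(zⱼ) f(zᵢ)) ⟨vᵢ, vⱼ⟩` is positive semidefinite, and `‖Δ(T)‖ ≤ 1`
iff the Gram kernel `⟨vᵢ, vⱼ⟩` is `Δ`-admissible. This gives `(2) ⇒ (1)` at once. Conversely,
for an admissible kernel `k` and `ε > 0`, the kernel `k + ε I` is still admissible (as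
`‖Δ(zᵢ)‖ < 1`) and positive definite, hence the Gram kernel of the rows of its square root,
which are linearly independent and so are the eigenvectors of a generic pair. Applying `(1)`
to this pair and letting `ε → 0` gives `(2)`.
-/

open scoped ComplexConjugate Kronecker

section Herm

variable {ι κ : Type*} [Fintype ι]

lemma herm_eq_dotProduct (ξ η : ι → ℂ) : herm ξ η = ξ ⬝ᵥ star η := rfl

lemma herm_self (x : ι → ℂ) : herm x x = ((‖WithLp.toLp 2 x‖ ^ 2 : ℝ) : ℂ) := by
  rw [EuclideanSpace.norm_sq_eq, herm]
  push_cast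
  exact Finset.sum_congr rfl fun p _ => by simp [Complex.mul_conj, Complex.normSq_eq_norm_sq]

lemma herm_smul_smul (a b : ℂ) (x y : ι → ℂ) :
    herm (a • x) (b • y) = a * conj b * herm x y := by
  simp only [herm_eq_dotProduct, star_smul, smul_dotProduct, dotProduct_smul, smul_eq_mul]
  simp only [Complex.star_def, mul_left_comm, mul_assoc]

lemma herm_sum_smul [Fintype κ] (x : κ → ι → ℂ) (c : κ → ℂ) :
    herm (∑ j, c j • x j) (∑ j, c j • x j) = ∑ i, ∑ j, herm (x i) (x j) * c i * conj (c j) := by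
  simp only [herm_eq_dotProduct, star_sum, sum_dotProduct, dotProduct_sum, star_smul,
    smul_dotProduct, dotProduct_smul, smul_eq_mul, Finset.mul_sum]
  rw [Finset.sum_comm]
  exact Finset.sum_congr rfl fun _ _ => Finset.sum_congr rfl fun _ _ => by
    simp only [RCLike.star_def]; ring

lemma herm_tpr_tpr (ξ η : ι → ℂ) (v w : Fin 2 → ℂ) :
    herm (tpr ξ v) (tpr η w) = herm ξ η * herm v w := by
  simp only [herm, tpr, Fintype.sum_prod_type, Finset.sum_mul_sum, map_mul]
  exact Finset.sum_congr rfl fun _ _ => Finset.sum_congr rfl fun _ _ => by ring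

lemma psd2_herm (v : Fin 2 → ι → ℂ) : PSD2 fun i j => herm (v i) (v j) := by
  intro c
  rw [← herm_sum_smul, herm_self]
  exact Complex.zero_le_real.mpr (sq_nonneg _)

lemma psd2_herm_sub_herm_iff {m n : Type*} [Fintype m] [Fintype n] (x : Fin 2 → n → ℂ)
    (y : Fin 2 → m → ℂ) :
    PSD2 (fun i j => herm (x i) (x j) - herm (y i) (y j)) ↔
      ∀ c : Fin 2 → ℂ, ‖WithLp.toLp 2 (∑ j, c j • y j)‖ ≤ ‖WithLp.toLp 2 (∑ j, c j • x j)‖ := by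
  refine forall_congr' fun c => ?_
  have hsum : ∑ i, ∑ j, (herm (x i) (x j) - herm (y i) (y j)) * c i * conj (c j) =
      herm (∑ j, c j • x j) (∑ j, c j • x j) - herm (∑ j, c j • y j) (∑ j, c j • y j) := by
    simp only [herm_sum_smul, sub_mul, Finset.sum_sub_distrib]
  rw [hsum, herm_self, herm_self, ← Complex.ofReal_sub, Complex.zero_le_real, sub_nonneg,
    sq_le_sq₀ (norm_nonneg _) (norm_nonneg _)]

end Herm

section Tensor

variable {m n : Type*}

lemma tpr_smul_right (ξ : m → ℂ) (a : ℂ) (w : Fin 2 → ℂ) : tpr ξ (a • w) = a • tpr ξ w := by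
  funext p
  simp only [tpr, Pi.smul_apply, smul_eq_mul]
  ring

lemma tpr_sum_smul {ι : Type*} [Fintype ι] (c : ι → ℂ) (ξ : ι → m → ℂ) (w : Fin 2 → ℂ) :
    tpr (∑ i, c i • ξ i) w = ∑ i, c i • tpr (ξ i) w := by
  funext p
  simp [tpr, Finset.sum_apply, Finset.sum_mul, mul_assoc]

lemma kronecker_mulVec_tpr [Fintype n] (A : Matrix m n ℂ) (B : Matrix (Fin 2) (Fin 2) ℂ)
    (ξ : n → ℂ) (w : Fin 2 → ℂ) : (A ⊗ₖ B) *ᵥ tpr ξ w = tpr (A *ᵥ ξ) (B *ᵥ w) := by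
  funext p
  simp only [mulVec, tpr, dotProduct, kroneckerMap_apply, Fintype.sum_prod_type,
    Finset.sum_mul_sum]
  exact Finset.sum_congr rfl fun _ _ => Finset.sum_congr rfl fun _ _ => by ring

lemma mulVec_tpr_eq_of_single [Fintype n] [DecidableEq n] {D : Matrix (m × Fin 2) (n × Fin 2) ℂ}
    {F : Matrix m n ℂ} {w : Fin 2 → ℂ}
    (h : ∀ i, D *ᵥ tpr (Pi.single i 1) w = tpr (F *ᵥ Pi.single i 1) w) (ξ : n → ℂ) :
    D *ᵥ tpr ξ w = tpr (F *ᵥ ξ) w := by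
  rw [pi_eq_sum_univ' ξ]
  simp only [tpr_sum_smul, mulVec_sum, mulVec_smul, h]

end Tensor

section LinearIndependent

variable {K ι : Type*} [Field K] [Fintype ι] {v : ι → ι → K}

lemma LinearIndependent.exists_sum_smul_eq (hv : LinearIndependent K v) (x : ι → K) :
    ∃ c : ι → K, ∑ j, c j • v j = x := by
  rw [← Submodule.mem_span_range_iff_exists_fun, hv.span_eq_top_of_card_eq_finrank' (by simp)]
  trivial

lemma LinearIndependent.exists_dotProduct_eq_one [DecidableEq ι] (hv : LinearIndependent K v) :
    ∃ w : ι → ι → K, ∀ j k, w j ⬝ᵥ v k = (1 : Matrix ι ι K) j k := by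
  set B : Matrix ι ι K := (Matrix.of v)ᵀ
  have hB : IsUnit B.det := B.isUnit_iff_isUnit_det.mp (linearIndependent_cols_iff_isUnit.mp hv)
  refine ⟨fun j => (B⁻¹ : Matrix ι ι K) j, fun j k => ?_⟩
  rw [← nonsing_inv_mul B hB, mul_apply']
  rfl

lemma LinearIndependent.exists_mulVec_eq_smul [DecidableEq ι] (hv : LinearIndependent K v)
    (μ : ι → K) : ∃ M : Matrix ι ι K, ∀ j, M *ᵥ v j = μ j • v j := by
  obtain ⟨w, hw⟩ := hv.exists_dotProduct_eq_one
  refine ⟨∑ i, μ i • vecMulVec (v i) (w i), fun j => ?_⟩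
  simp [sum_mulVec, smul_mulVec, vecMulVec_mulVec, hw, one_apply]

end LinearIndependent

section Eigenbasis

variable {m n : Type*} {v : Fin 2 → Fin 2 → ℂ}

lemma LinearIndependent.exists_sum_tpr_eq (hv : LinearIndependent ℂ v) (x : n × Fin 2 → ℂ) :
    ∃ ξ : Fin 2 → n → ℂ, ∑ j, tpr (ξ j) (v j) = x := by
  choose c hc using fun a => hv.exists_sum_smul_eq fun q => x (a, q)
  refine ⟨fun j a => c a j, funext fun p => ?_⟩
  simpa [tpr, Finset.sum_apply, mul_comm] using congrFun (hc p.1) p.2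

lemma LinearIndependent.exists_mulVec_tpr_eq [Fintype n] (hv : LinearIndependent ℂ v)
    (F : Fin 2 → Matrix m n ℂ) :
    ∃ D : Matrix (m × Fin 2) (n × Fin 2) ℂ, ∀ ξ j, D *ᵥ tpr ξ (v j) = tpr (F j *ᵥ ξ) (v j) := by
  obtain ⟨w, hw⟩ := hv.exists_dotProduct_eq_one
  refine ⟨∑ i, F i ⊗ₖ vecMulVec (v i) (w i), fun ξ j => ?_⟩
  rw [sum_mulVec]
  simp only [kronecker_mulVec_tpr, vecMulVec_mulVec, hw, op_smul_eq_smul, tpr_smul_right]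
  simp [one_apply]

lemma LinearIndependent.exists_isGenericTuple {d : ℕ} (hv : LinearIndependent ℂ v)
    {z : Fin 2 → Fin d → ℂ} (hz : z 0 ≠ z 1) : ∃ T, IsGenericTuple T v z := by
  choose T hT using fun i => hv.exists_mulVec_eq_smul fun j => z j i
  exact ⟨T, hv, hz, hT⟩

end Eigenbasis

section PSD2

lemma Matrix.posSemidef_iff_forall_star_dotProduct_mulVec_nonneg {n : Type*} [Fintype n]
    [DecidableEq n] {A : Matrix n n ℂ} : A.PosSemidef ↔ ∀ x, 0 ≤ star x ⬝ᵥ (A *ᵥ x) := by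
  rw [posSemidef_iff_dotProduct_mulVec]
  refine ⟨And.right, fun h => ⟨?_, h⟩⟩
  rw [← isSymmetric_toEuclideanLin_iff, LinearMap.isSymmetric_iff_inner_map_self_real]
  intro x
  have hx : inner ℂ (toEuclideanLin A x) x = star (star x.ofLp ⬝ᵥ (A *ᵥ x.ofLp)) := by
    rw [EuclideanSpace.inner_eq_star_dotProduct, star_dotProduct, star_star, dotProduct_comm]
    rfl
  rw [hx, (IsSelfAdjoint.of_nonneg (h x.ofLp)).star_eq]
  exact Complex.conj_eq_iff_im.mpr (Complex.nonneg_iff.mp (h x.ofLp)).2.symm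

lemma psd2_iff_posSemidef (k : Fin 2 → Fin 2 → ℂ) : PSD2 k ↔ (Matrix.of k).PosSemidef := by
  have hsum (c : Fin 2 → ℂ) :
      ∑ i, ∑ j, k i j * c i * conj (c j) = star (star c) ⬝ᵥ (Matrix.of k *ᵥ star c) := by
    simp only [star_star, dotProduct, mulVec, Finset.mul_sum, of_apply, Pi.star_apply]
    exact Finset.sum_congr rfl fun _ _ => Finset.sum_congr rfl fun _ _ => by
      simp only [RCLike.star_def]; ring
  rw [posSemidef_iff_forall_star_dotProduct_mulVec_nonneg]
  refine ⟨fun h x => ?_, fun h c => hsum c ▸ h _⟩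
  simpa only [hsum, star_star] using h (star x)

lemma psd2_mul_of_forall_pos_add_diagonal (a k : Fin 2 → Fin 2 → ℂ)
    (h : ∀ ε : ℝ, 0 < ε → PSD2 fun i j => a i j * (k i j + if i = j then (ε : ℂ) else 0)) :
    PSD2 fun i j => a i j * k i j := by
  intro c
  have hcont : Continuous fun ε : ℝ =>
      ∑ i, ∑ j, a i j * (k i j + if i = j then (ε : ℂ) else 0) * c i * conj (c j) := by
    refine continuous_finsetSum _ fun i _ => continuous_finsetSum _ fun j _ => ?_
    by_cases hij : i = j <;> simp only [hij, if_true, if_false] <;> fun_prop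
  have hlim := (hcont.tendsto 0).mono_left (nhdsWithin_le_nhds (s := Set.Ioi 0))
  simp only [Complex.ofReal_zero, ite_self, add_zero] at hlim
  exact ge_of_tendsto hlim (eventually_nhdsWithin_of_forall fun ε hε => h ε hε c)

open scoped MatrixOrder in
lemma Matrix.PosDef.exists_linearIndependent_herm_eq {ι : Type*} [Fintype ι] [DecidableEq ι]
    {M : Matrix ι ι ℂ} (hM : M.PosDef) :
    ∃ v : ι → ι → ℂ, LinearIndependent ℂ v ∧ ∀ i j, herm (v i) (v j) = M i j := by
  set S := CFC.sqrt M
  have hSS : S * S = M := CFC.sqrt_mul_sqrt_self M hM.posSemidef.nonneg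
  have hS : Sᴴ = S := (IsSelfAdjoint.of_nonneg (CFC.sqrt_nonneg M)).star_eq
  refine ⟨S, linearIndependent_rows_iff_isUnit.mpr (isUnit_of_mul_isUnit_left (hSS ▸ hM.isUnit)),
    fun i j => ?_⟩
  rw [← hSS, ← congrArg (S * ·) hS, mul_apply]
  rfl

lemma exists_linearIndependent_herm_eq_add_diagonal {k : Fin 2 → Fin 2 → ℂ} (hk : PSD2 k)
    {ε : ℝ} (hε : 0 < ε) : ∃ v : Fin 2 → Fin 2 → ℂ, LinearIndependent ℂ v ∧
      ∀ i j, herm (v i) (v j) = k i j + if i = j then (ε : ℂ) else 0 := by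
  have hM : (Matrix.of k + diagonal fun _ => (ε : ℂ)).PosDef :=
    PosDef.posSemidef_add ((psd2_iff_posSemidef k).1 hk)
      (posDef_diagonal_iff.2 fun _ => Complex.zero_lt_real.2 hε)
  simpa [diagonal_apply] using hM.exists_linearIndependent_herm_eq

end PSD2

def IsAdmissibleKernel {m n : Type*} [Fintype m] [Fintype n] (F : Fin 2 → Matrix m n ℂ)
    (k : Fin 2 → Fin 2 → ℂ) : Prop :=
  ∀ ξ : Fin 2 → n → ℂ, PSD2 fun i j => (herm (ξ i) (ξ j) - herm (F i *ᵥ ξ i) (F j *ᵥ ξ j)) * k i j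

section Norm

variable {m n : Type*} [Fintype m] [Fintype n] [DecidableEq n]

lemma Matrix.l2_opNorm_le_one_iff (A : Matrix m n ℂ) :
    ‖A‖ ≤ 1 ↔ ∀ x, ‖WithLp.toLp 2 (A *ᵥ x)‖ ≤ ‖WithLp.toLp 2 x‖ := by
  rw [l2_opNorm_def, ContinuousLinearMap.opNorm_le_iff zero_le_one]
  simp only [one_mul]
  exact (WithLp.equiv 2 (n → ℂ)).forall_congr' fun x => Iff.rfl

lemma Matrix.l2_opNorm_le_one_iff_forall_psd2 {ι : Type*} (A : Matrix m n ℂ)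
    (X : ι → Fin 2 → n → ℂ) (hX : ∀ x, ∃ t, ∃ c : Fin 2 → ℂ, ∑ j, c j • X t j = x) :
    ‖A‖ ≤ 1 ↔ ∀ t, PSD2 fun i j => herm (X t i) (X t j) - herm (A *ᵥ X t i) (A *ᵥ X t j) := by
  simp only [psd2_herm_sub_herm_iff, ← mulVec_smul, ← mulVec_sum, l2_opNorm_le_one_iff]
  refine ⟨fun h t c => h _, fun h x => ?_⟩
  obtain ⟨t, c, rfl⟩ := hX x
  exact h t c

lemma Matrix.l2_opNorm_le_one_iff_psd2_of_mulVec_eq_smul {v : Fin 2 → Fin 2 → ℂ}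
    (hv : LinearIndependent ℂ v) {M : Matrix (Fin 2) (Fin 2) ℂ} {μ : Fin 2 → ℂ}
    (hM : ∀ j, M *ᵥ v j = μ j • v j) :
    ‖M‖ ≤ 1 ↔ PSD2 fun i j => (1 - conj (μ j) * μ i) * herm (v i) (v j) := by
  rw [l2_opNorm_le_one_iff_forall_psd2 M (fun (_ : Unit) => v)
    fun x => ⟨(), hv.exists_sum_smul_eq x⟩]
  simp only [hM, herm_smul_smul, forall_const]
  congr! 3 with i j
  ring

lemma Matrix.l2_opNorm_le_one_iff_isAdmissibleKernel_of_mulVec_tpr {v : Fin 2 → Fin 2 → ℂ}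
    (hv : LinearIndependent ℂ v) {D : Matrix (m × Fin 2) (n × Fin 2) ℂ}
    {F : Fin 2 → Matrix m n ℂ} (hD : ∀ ξ j, D *ᵥ tpr ξ (v j) = tpr (F j *ᵥ ξ) (v j)) :
    ‖D‖ ≤ 1 ↔ IsAdmissibleKernel F fun i j => herm (v i) (v j) := by
  rw [l2_opNorm_le_one_iff_forall_psd2 D (fun (ξ : Fin 2 → n → ℂ) j => tpr (ξ j) (v j))
    fun x => (hv.exists_sum_tpr_eq x).imp fun ξ hξ => ⟨1, by simpa using hξ⟩]
  simp only [IsAdmissibleKernel, hD, herm_tpr_tpr, sub_mul]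

lemma IsAdmissibleKernel.add_diagonal {F : Fin 2 → Matrix m n ℂ} {k : Fin 2 → Fin 2 → ℂ}
    (hk : IsAdmissibleKernel F k) (hF : ∀ j, ‖F j‖ ≤ 1) {ε : ℝ} (hε : 0 ≤ ε) :
    IsAdmissibleKernel F fun i j => k i j + if i = j then (ε : ℂ) else 0 := by
  intro ξ
  have hdiag : ∀ i, 0 ≤ (ε : ℂ) * (herm (ξ i) (ξ i) - herm (F i *ᵥ ξ i) (F i *ᵥ ξ i)) := by
    intro i
    rw [herm_self, herm_self, ← Complex.ofReal_sub, ← Complex.ofReal_mul, Complex.zero_le_real]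
    have := (l2_opNorm_le_one_iff (F i)).1 (hF i) (ξ i)
    exact mul_nonneg hε (sub_nonneg.2 (pow_le_pow_left₀ (norm_nonneg _) this 2))
  rw [psd2_iff_posSemidef]
  convert ((psd2_iff_posSemidef _).1 (hk ξ)).add (PosSemidef.diagonal hdiag) using 1
  ext i j
  by_cases hij : i = j
  · subst hij
    simp only [of_apply, if_true, Matrix.add_apply, diagonal_apply_eq]
    ring
  · simp [hij]

end Norm

lemma deltaTContract_iff {β : Type*} {s r : ℕ} {Δ : β → Matrix (Fin s) (Fin r) ℂ}
    {v : Fin 2 → Fin 2 → ℂ} (hv : LinearIndependent ℂ v) (z : Fin 2 → β) :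
    DeltaTContract Δ v z ↔ IsAdmissibleKernel (fun j => Δ (z j)) fun i j => herm (v i) (v j) := by
  constructor
  · intro h
    obtain ⟨D, hD⟩ := hv.exists_mulVec_tpr_eq fun j => Δ (z j)
    exact (l2_opNorm_le_one_iff_isAdmissibleKernel_of_mulVec_tpr hv hD).1 (h D fun i j => hD _ j)
  · intro h D hD
    exact (l2_opNorm_le_one_iff_isAdmissibleKernel_of_mulVec_tpr hv
      fun ξ j => mulVec_tpr_eq_of_single (fun i => hD i j) ξ).2 h

theorem memS2gen_iff_admissible_kernels_general {d s r : ℕ} (E : Set (Fin d → ℂ))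
    (Δ : (Fin d → ℂ) → Matrix (Fin s) (Fin r) ℂ)
    (f : (Fin d → ℂ) → ℂ) :
    MemS2gen E Δ f ↔
      ∀ zz : Fin 2 → (Fin d → ℂ), (∀ j, zz j ∈ BDelta E Δ) → zz 0 ≠ zz 1 →
        ∀ k : Fin 2 → Fin 2 → ℂ, PSD2 k →
          (∀ ξ : Fin 2 → (Fin r → ℂ),
            PSD2 fun i j =>
              (herm (ξ i) (ξ j) - herm (Δ (zz i) *ᵥ ξ i) (Δ (zz j) *ᵥ ξ j)) * k i j) →
          PSD2 fun i j => (1 - (starRingEnd ℂ) (f (zz j)) * f (zz i)) * k i j := by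
  constructor
  · intro h zz hzz hne k hk hadm
    refine psd2_mul_of_forall_pos_add_diagonal _ _ fun ε hε => ?_
    obtain ⟨v, hv, hvk⟩ := exists_linearIndependent_herm_eq_add_diagonal hk hε
    obtain ⟨T, hT⟩ := hv.exists_isGenericTuple hne
    obtain ⟨fT, hfT⟩ := hv.exists_mulVec_eq_smul fun j => f (zz j)
    have hDT : DeltaTContract Δ v zz := by
      rw [deltaTContract_iff hv]
      simpa only [hvk] using IsAdmissibleKernel.add_diagonal hadm (fun j => (hzz j).2.le) hε.le
    simpa only [hvk] using
      (l2_opNorm_le_one_iff_psd2_of_mulVec_eq_smul hv hfT).1 (h T v zz hT hzz hDT fT hfT)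
  · rintro h T v z ⟨hv, hne, -⟩ hz hDT fT hfT
    exact (l2_opNorm_le_one_iff_psd2_of_mulVec_eq_smul hv hfT).2
      (h z hz hne _ (psd2_herm v) ((deltaTContract_iff hv z).1 hDT))

/-- **Theorem 4.1, (1) ⇔ (2)**: `f ∈ S_{2,gen}(B_Δ)` iff over every pair of distinct points of
`B_Δ`, `f` maps every `Δ`-admissible positive semidefinite kernel to a positive semidefinite
kernel. -/
theorem memS2gen_iff_admissible_kernels {d s r : ℕ} (E : Set (Fin d → ℂ))
    (Δ : (Fin d → ℂ) → Matrix (Fin s) (Fin r) ℂ)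
    (hE : ∃ z w, z ∈ BDelta E Δ ∧ w ∈ BDelta E Δ ∧ z ≠ w)
    (f : (Fin d → ℂ) → ℂ) :
    MemS2gen E Δ f ↔
      ∀ zz : Fin 2 → (Fin d → ℂ), (∀ j, zz j ∈ BDelta E Δ) → zz 0 ≠ zz 1 →
        ∀ k : Fin 2 → Fin 2 → ℂ, PSD2 k →
          (∀ ξ : Fin 2 → (Fin r → ℂ),
            PSD2 fun i j =>
              (herm (ξ i) (ξ j) - herm (Δ (zz i) *ᵥ ξ i) (Δ (zz j) *ᵥ ξ j)) * k i j) →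
          PSD2 fun i j => (1 - (starRingEnd ℂ) (f (zz j)) * f (zz i)) * k i j :=
  memS2gen_iff_admissible_kernels_general E Δ f
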